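/- arXiv:1405.3735 — 7 statements merged into one kernel-verified Lean document; each statement's English description precedes it below -/
import Mathlib

section
/- For all natural numbers k and n, the double sum ∑_{i=0}^{n} ∑_{j=0}^{n-i} (-1)^i · C(n-i, j) · C(k, i) · C(k, j) equals 1. -/
open Finset Polynomial

lemma inner (k m : ℕ) :
    ∑ j ∈ Finset.range (m + 1), (m.choose j * k.choose j : ℤ) = ((m + k).choose m : ℤ) := by
  have h1 : (m + k).choose m = ∑ a ∈ Finset.range (m+1), m.choose a * k.choose (m - a) := by
    rw [Nat.add_choose_eq]
    rw [Finset.Nat.sum_antidiagonal_eq_sum_range_succ (fun a b => m.choose a * k.choose b) m]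
  have h2 := Finset.sum_range_reflect (fun a => m.choose a * k.choose (m - a)) (m+1)
  rw [h1, ← h2]
  push_cast
  apply Finset.sum_congr rfl
  intro j hj
  have hj' := Finset.mem_range.1 hj
  rw [Nat.choose_symm (by omega : j ≤ m), Nat.sub_sub_self (by omega : j ≤ m)]

lemma polyid (k n : ℕ) :
    (X : ℤ[X]) ^ k * (X + 1) ^ n
      = ∑ i ∈ Finset.range (k + 1), ((-1 : ℤ[X]) ^ i * (k.choose i : ℤ[X]) * (X + 1) ^ (k + n - i)) := by
  have h : (X : ℤ[X]) ^ k = ((X + 1) - 1) ^ k := by ring_nf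
  rw [h, sub_pow, Finset.sum_mul, ← Finset.sum_range_reflect]
  apply Finset.sum_congr rfl
  intro i hi
  have hi' := Finset.mem_range.1 hi
  have e1 : k + 1 - 1 - i = k - i := by omega
  rw [e1, one_pow, Nat.choose_symm (by omega : i ≤ k), mul_one]
  have e2 : (-1 : ℤ[X]) ^ (k - i + k) = (-1) ^ i := by
    rw [show k - i + k = i + 2 * (k - i) by omega, pow_add, pow_mul]
    simp
  rw [e2, show k + n - i = k - i + n by omega, pow_add]
  ring

lemma outer' (k n : ℕ) :
    ∑ i ∈ Finset.range (k + 1), ((-1 : ℤ) ^ i * (k.choose i) * ((k + n - i).choose k)) = 1 := by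
  have h := congrArg (fun p => Polynomial.coeff p k) (polyid k n)
  simp only [Polynomial.finset_sum_coeff] at h
  have h0 := Polynomial.coeff_X_pow_mul ((X + 1 : ℤ[X]) ^ n) k 0
  rw [zero_add] at h0
  rw [h0, Polynomial.coeff_zero_eq_eval_zero] at h
  simp only [Polynomial.eval_pow, Polynomial.eval_add, Polynomial.eval_X, Polynomial.eval_one,
    zero_add, one_pow] at h
  refine Eq.trans ?_ h.symm
  apply Finset.sum_congr rfl
  intro i hi
  symm
  have : ((-1 : ℤ[X]) ^ i * (k.choose i : ℤ[X]) * (X + 1) ^ (k + n - i)).coeff k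
      = (-1 : ℤ) ^ i * (k.choose i) * ((k + n - i).choose k) := by
    rw [show ((-1 : ℤ[X]) ^ i * (k.choose i : ℤ[X])) = Polynomial.C ((-1 : ℤ) ^ i * (k.choose i : ℤ)) by rw [map_mul, map_pow, map_neg, map_one, Polynomial.C_eq_natCast]]
    rw [Polynomial.coeff_C_mul, Polynomial.coeff_X_add_one_pow]
  rw [this]

lemma outer (k n : ℕ) :
    ∑ i ∈ Finset.range (n + 1), ((-1 : ℤ) ^ i * (k.choose i) * ((n - i + k).choose (n - i))) = 1 := by
  have step1 : ∑ i ∈ Finset.range (n + 1), ((-1 : ℤ) ^ i * (k.choose i) * ((n - i + k).choose (n - i)))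
      = ∑ i ∈ Finset.range (n + 1), ((-1 : ℤ) ^ i * (k.choose i) * ((k + n - i).choose k)) := by
    apply Finset.sum_congr rfl
    intro i hi
    have hi' := Finset.mem_range.1 hi
    have e : (n - i + k).choose (n - i) = (k + n - i).choose k := by
      have := Nat.choose_symm (Nat.le_add_left k (n - i))
      rw [Nat.add_sub_cancel] at this
      rw [this]
      congr 1
      omega
    rw [e]
  rw [step1]
  rw [Finset.sum_subset (Finset.range_subset_range.2 (by omega : n + 1 ≤ k + n + 1))
    (by intro i hi hni
        simp only [Finset.mem_range] at hi hni
        rw [Nat.choose_eq_zero_of_lt (by omega : k + n - i < k)]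
        push_cast; ring)]
  rw [← Finset.sum_subset (Finset.range_subset_range.2 (by omega : k + 1 ≤ k + n + 1))
    (by intro i hi hni
        simp only [Finset.mem_range] at hi hni
        rw [Nat.choose_eq_zero_of_lt (by omega : k < i)]
        push_cast; ring)]
  exact outer' k n

/-- For all natural numbers k and n,
∑_{i=0}^{n} ∑_{j=0}^{n-i} (-1)^i · C(n-i, j) · C(k, i) · C(k, j) = 1. -/
theorem stmt0 (k n : ℕ) :
    ∑ i ∈ Finset.range (n + 1), ∑ j ∈ Finset.range (n - i + 1),
      ((-1 : ℤ) ^ i * ((n - i).choose j) * (k.choose i) * (k.choose j)) = 1 := by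
  have key : ∀ i, ∑ j ∈ Finset.range (n - i + 1),
      ((-1 : ℤ) ^ i * ((n - i).choose j) * (k.choose i) * (k.choose j))
      = (-1 : ℤ) ^ i * (k.choose i) * ((n - i + k).choose (n - i)) := by
    intro i
    have : ∑ j ∈ Finset.range (n - i + 1),
        ((-1 : ℤ) ^ i * ((n - i).choose j) * (k.choose i) * (k.choose j))
        = (-1 : ℤ) ^ i * (k.choose i) *
          ∑ j ∈ Finset.range (n - i + 1), (((n - i).choose j : ℤ) * (k.choose j)) := by
      rw [Finset.mul_sum]
      apply Finset.sum_congr rfl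
      intro j _
      ring
    rw [this, inner k (n - i)]
  rw [Finset.sum_congr rfl (fun i _ => key i)]
  exact outer k n
end

section
/- Let p(x,y) = ∑_{i,j≥0} a_{i,j} x^i y^j be a two-variable polynomial over a commutative ring, and define I_k(p) = ∑_{i=0}^{k} ∑_{j=0}^{k-i} (-1)^j C(k-i, j) a_{i,j}. Then I_k(y · p) = −∑_{s=0}^{k-1} I_s(p). -/
/-- The linear functional I_k on two-variable polynomials (viewed as
polynomials in x over polynomials in y): I_k(p) = ∑_{i=0}^{k} ∑_{j=0}^{k-i}
(-1)^j C(k-i,j) a_{i,j}, where a_{i,j} is the coefficient of x^i y^j. -/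
noncomputable def Ik {R : Type*} [CommRing R] (k : ℕ) (p : Polynomial (Polynomial R)) : R :=
  ∑ i ∈ Finset.range (k + 1), ∑ j ∈ Finset.range (k - i + 1),
    (-1 : R) ^ j * ((k - i).choose j : R) * ((p.coeff i).coeff j)

lemma aux_shift {R : Type*} [CommRing R] (n : ℕ) (q : Polynomial R) :
    ∑ j ∈ Finset.range (n + 2), (-1 : R) ^ j * ((n + 1).choose j : R) * ((Polynomial.X * q).coeff j)
      = (∑ j ∈ Finset.range (n + 1), (-1 : R) ^ j * (n.choose j : R) * ((Polynomial.X * q).coeff j))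
        - ∑ j ∈ Finset.range (n + 1), (-1 : R) ^ j * (n.choose j : R) * (q.coeff j) := by
  conv_lhs => rw [Finset.sum_range_succ' _ (n+1)]
  conv_rhs => rw [Finset.sum_range_succ' _ n]
  simp only [Polynomial.coeff_X_mul, Polynomial.mul_coeff_zero, Polynomial.coeff_X_zero,
    Nat.choose_zero_right, mul_zero, zero_mul, add_zero, pow_zero, Nat.cast_one, mul_one, one_mul]
  have h : ∑ j ∈ Finset.range n, (-1:R)^(j+1) * (n.choose (j+1) : R) * q.coeff j
      = ∑ j ∈ Finset.range (n+1), (-1:R)^(j+1) * (n.choose (j+1) : R) * q.coeff j := by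
    rw [Finset.sum_range_succ]; simp [Nat.choose_succ_self]
  rw [h, ← Finset.sum_sub_distrib]
  refine Finset.sum_congr rfl fun j _ => ?_
  rw [Nat.choose_succ_succ]
  push_cast
  ring

/-- Shifting by y: I_k(y · p) = -∑_{s=0}^{k-1} I_s(p). -/
theorem stmt3 {R : Type*} [CommRing R] (p : Polynomial (Polynomial R)) (k : ℕ) :
    Ik k (Polynomial.C Polynomial.X * p) = -∑ s ∈ Finset.range k, Ik s p := by
  induction k with
  | zero => simp [Ik, Polynomial.coeff_C_mul]
  | succ k ih =>
    have key : Ik (k+1) (Polynomial.C Polynomial.X * p)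
        = Ik k (Polynomial.C Polynomial.X * p) - Ik k p := by
      unfold Ik
      rw [Finset.sum_range_succ]
      have hlast : ∑ j ∈ Finset.range (k + 1 - (k+1) + 1),
          (-1:R)^j * (((k+1-(k+1)).choose j : R)) *
            (((Polynomial.C Polynomial.X * p).coeff (k+1)).coeff j) = 0 := by
        simp [Polynomial.coeff_C_mul]
      rw [hlast, add_zero, ← Finset.sum_sub_distrib]
      refine Finset.sum_congr rfl fun i hi => ?_
      have hik : i ≤ k := Nat.lt_succ_iff.mp (Finset.mem_range.mp hi)
      have h1 : k + 1 - i = (k - i) + 1 := by omega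
      rw [h1]
      simp only [Polynomial.coeff_C_mul]
      exact aux_shift (k - i) (p.coeff i)
    rw [key, ih, Finset.sum_range_succ]
    ring
end

section
/- Let G = (S, r) be a ranked set with |S| = n and rank r = r(S) < n, and let T(G; x, y) = ∑ b_{i,j} x^i y^j be its Tutte polynomial. Then ∑_{i=0}^{r} ∑_{j=0}^{r−i} (−1)^j C(r−i, j) b_{i,j} = 0. -/
/-!
Write `R = r(S)`, `N = |S|`. Since `(-1)^j C(R-i, j)` is the coefficient of `z^(R-i-j)` in
`(-1)^j (1-z)^(-(j+1))`, the alternating sum of the `b_{i,j}` is the coefficient of `z^R` in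
`T(z, -z/(1-z)) / (1-z)`. This point lies on the hyperbola `(x-1)(y-1) = 1`, where each term
`(x-1)^(R-r(A)) (y-1)^(|A|-r(A))` of `T` equals `(x-1)^R (y-1)^|A|`; summing over `A` gives
`T = (x-1)^R y^N`, which is divisible by `z^N` because `y = -z/(1-z)`. As `R < N`, the coefficient
of `z^R` vanishes.
-/

open Finset

variable {α : Type*} [DecidableEq α]

/-- The generalized Tutte polynomial of a ranked set (S, r), as a polynomial
in x over polynomials in y; the coefficient b_{i,j} of x^i y^j is
((tutte S r).coeff i).coeff j. -/
noncomputable def tutte (S : Finset α) (r : Finset α → ℤ) : Polynomial (Polynomial ℤ) :=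
  ∑ A ∈ S.powerset, (Polynomial.X - 1) ^ (r S - r A).toNat *
    (Polynomial.C Polynomial.X - 1) ^ ((A.card : ℤ) - r A).toNat

open PowerSeries

theorem pow_mul_pow_eq_of_mul_eq_one {M : Type*} [CommMonoid M] {u v : M} (huv : u * v = 1)
    {m n k l : ℕ} (h : m + l = k + n) : u ^ m * v ^ n = u ^ k * v ^ l :=
  calc u ^ m * v ^ n = u ^ m * v ^ n * (u * v) ^ l := by rw [huv, one_pow, mul_one]
    _ = u ^ (m + l) * v ^ (n + l) := by rw [mul_pow, pow_add, pow_add]; ac_rfl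
    _ = u ^ k * v ^ l * (u * v) ^ n := by rw [h, mul_pow, pow_add, pow_add]; ac_rfl
    _ = u ^ k * v ^ l := by rw [huv, one_pow, mul_one]

/-- Evaluation at `(x, y) = (a, b)`, with `x` the outer variable as in `tutte`. -/
noncomputable def evalAt {K : Type*} [CommRing K] (a b : K) : Polynomial (Polynomial ℤ) →+* K :=
  Polynomial.eval₂RingHom (Polynomial.eval₂RingHom (Int.castRingHom K) b) a

theorem evalAt_monomial {K : Type*} [CommRing K] (a b : K) (i j : ℕ) (c : ℤ) :
    evalAt a b (Polynomial.monomial i (Polynomial.monomial j c)) = c * a ^ i * b ^ j := by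
  simp only [evalAt, Polynomial.coe_eval₂RingHom, Polynomial.eval₂_monomial, eq_intCast]
  ring

omit [DecidableEq α] in
theorem evalAt_tutte_of_sub_one_mul_sub_one_eq_one {K : Type*} [CommRing K] {a b : K}
    (hab : (a - 1) * (b - 1) = 1) (S : Finset α) (r : Finset α → ℤ)
    (h0 : r ∅ = 0) (h1 : ∀ A ⊆ S, r A ≤ r S) (h2 : ∀ A ⊆ S, r A ≤ (A.card : ℤ)) :
    evalAt a b (tutte S r) = (a - 1) ^ (r S).toNat * b ^ S.card := by
  have hrS : 0 ≤ r S := h0 ▸ h1 ∅ (empty_subset S)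
  have hterm : ∀ A ∈ S.powerset, evalAt a b ((Polynomial.X - 1) ^ (r S - r A).toNat *
      (Polynomial.C Polynomial.X - 1) ^ ((A.card : ℤ) - r A).toNat) =
      (a - 1) ^ (r S).toNat * (b - 1) ^ A.card := by
    intro A hA
    have hAS := mem_powerset.1 hA
    simp only [map_mul, map_pow, map_sub, map_one, evalAt, Polynomial.coe_eval₂RingHom,
      Polynomial.eval₂_X, Polynomial.eval₂_C]
    exact pow_mul_pow_eq_of_mul_eq_one hab (by have := h1 A hAS; have := h2 A hAS; omega)
  rw [tutte, map_sum, sum_congr rfl hterm, ← mul_sum]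
  congr 1
  simpa using sum_pow_mul_eq_add_pow (b - 1) 1 S

noncomputable def alternatingCoeffSum (R : ℕ) (f : Polynomial (Polynomial ℤ)) : ℤ :=
  ∑ i ∈ range (R + 1), ∑ j ∈ range (R - i + 1),
    (-1 : ℤ) ^ j * ((R - i).choose j : ℤ) * ((f.coeff i).coeff j)

theorem alternatingCoeffSum_add (R : ℕ) (f g : Polynomial (Polynomial ℤ)) :
    alternatingCoeffSum R (f + g) = alternatingCoeffSum R f + alternatingCoeffSum R g := by
  simp only [alternatingCoeffSum, Polynomial.coeff_add, mul_add, sum_add_distrib]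

theorem alternatingCoeffSum_monomial (R i j : ℕ) (c : ℤ) :
    alternatingCoeffSum R (Polynomial.monomial i (Polynomial.monomial j c)) =
      if i ≤ R then c * (-1) ^ j * ((R - i).choose j : ℤ) else 0 := by
  rw [alternatingCoeffSum]
  split_ifs with hi
  · rw [sum_eq_single_of_mem i (mem_range.2 (by omega))
      fun k _ hk => by simp [Polynomial.coeff_monomial_of_ne _ hk]]
    simp only [Polynomial.coeff_monomial_same, Polynomial.coeff_monomial, mul_ite, mul_zero,
      sum_ite_eq, mem_range]
    split_ifs with hj
    · ring
    · rw [Nat.choose_eq_zero_of_lt (by omega), Nat.cast_zero, mul_zero]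
  · exact sum_eq_zero fun k hk => sum_eq_zero fun l _ => by
      rw [Polynomial.coeff_monomial_of_ne _ (by rw [mem_range] at hk; omega),
        Polynomial.coeff_zero, mul_zero]

theorem coeff_evalAt_monomial_mul (R i j : ℕ) (c : ℤ) :
    coeff R (evalAt X (X * -PowerSeries.mk 1)
        (Polynomial.monomial i (Polynomial.monomial j c)) * PowerSeries.mk 1) =
      if i ≤ R then c * (-1) ^ j * ((R - i).choose j : ℤ) else 0 := by
  have hmono : evalAt X (X * -PowerSeries.mk 1)
      (Polynomial.monomial i (Polynomial.monomial j c)) * PowerSeries.mk 1 =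
      X ^ (i + j) * C (c * (-1) ^ j) * (PowerSeries.mk 1) ^ (j + 1) := by
    rw [evalAt_monomial]
    simp only [eq_intCast, Int.cast_mul, Int.cast_pow, Int.cast_neg, Int.cast_one]
    ring
  rw [hmono, mul_assoc, coeff_X_pow_mul', coeff_C_mul, mk_one_pow_eq_mk_choose_add,
    coeff_mk]
  split_ifs with hij hi hi
  · rw [show j + (R - (i + j)) = R - i by omega]
  · omega
  · rw [Nat.choose_eq_zero_of_lt (by omega), Nat.cast_zero, mul_zero]
  · rfl

theorem alternatingCoeffSum_eq_coeff_evalAt (R : ℕ) (f : Polynomial (Polynomial ℤ)) :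
    alternatingCoeffSum R f =
      coeff R (evalAt X (X * -PowerSeries.mk 1) f * PowerSeries.mk 1) := by
  induction f using Polynomial.induction_on' with
  | add f g hf hg => rw [alternatingCoeffSum_add, hf, hg, map_add, add_mul, map_add]
  | monomial i p =>
    induction p using Polynomial.induction_on' with
    | add p q hp hq =>
      rw [map_add, alternatingCoeffSum_add, hp, hq, map_add, add_mul, map_add]
    | monomial j c => rw [alternatingCoeffSum_monomial, coeff_evalAt_monomial_mul]

/-- The k = r(S) < n case: ∑_{i=0}^{r} ∑_{j=0}^{r-i} (-1)^j C(r-i,j) b_{i,j} = 0. -/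
theorem stmt11 (S : Finset α) (r : Finset α → ℤ)
    (h0 : r ∅ = 0) (h1 : ∀ A ⊆ S, r A ≤ r S) (h2 : ∀ A ⊆ S, r A ≤ (A.card : ℤ))
    (hrn : r S < (S.card : ℤ)) :
    ∑ i ∈ Finset.range ((r S).toNat + 1), ∑ j ∈ Finset.range ((r S).toNat - i + 1),
      (-1 : ℤ) ^ j * (((r S).toNat - i).choose j : ℤ) *
        (((tutte S r).coeff i).coeff j) = 0 := by
  set w : ℤ⟦X⟧ := PowerSeries.mk 1
  have hab : (X - 1) * (X * -w - 1) = 1 := by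
    linear_combination X * (mk_one_mul_one_sub_eq_one ℤ : w * (1 - X) = 1)
  have hdvd : X ^ S.card ∣ (X - 1) ^ (r S).toNat * (X * -w) ^ S.card * w :=
    dvd_mul_of_dvd_left (dvd_mul_of_dvd_right (pow_dvd_pow_of_dvd (dvd_mul_right X _) _) _) _
  change alternatingCoeffSum _ (tutte S r) = 0
  rw [alternatingCoeffSum_eq_coeff_evalAt,
    evalAt_tutte_of_sub_one_mul_sub_one_eq_one hab S r h0 h1 h2]
  exact X_pow_dvd_iff.1 hdvd _ (by have := h1 ∅ (empty_subset S); omega)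
end

section
/- Let G = (S, r) be a ranked set with |S| = n and Tutte polynomial T(G; x, y) = ∑ b_{i,j} x^i y^j. Then for all 0 ≤ k < n, ∑_{i=0}^{k} ∑_{j=0}^{k−i} (−1)^j C(k−i, j) b_{i,j} = 0. -/
open Finset

variable {α : Type*} [DecidableEq α]

/-!
The double sum is the coefficient of `t ^ k` in `T(t, -t / (1 - t)) / (1 - t)`, because
`(-1) ^ j * C(m, j)` is the coefficient of `t ^ m` in `(-t) ^ j / (1 - t) ^ (j + 1)`.
This substitution sends `x - 1` to `t - 1` and `y - 1` to `(t - 1)⁻¹`, so the subset `A`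
contributes `(t - 1) ^ (r(S) - |A|)`. Summing over `A ⊆ S` gives
`(t - 1) ^ (r(S) - n) * (1 + (t - 1)) ^ n = (t - 1) ^ (r(S) - n) * t ^ n`,
which has no coefficients below `t ^ n`.
-/

open PowerSeries

section Substitution

variable {R : Type*} [CommRing R]

theorem one_sub_invOneSubPow_one :
    1 - (invOneSubPow R 1).val = -X * (invOneSubPow R 1).val := by
  have h := (invOneSubPow R 1).val_inv
  rw [invOneSubPow_inv_eq_one_sub_pow, pow_one] at h
  linear_combination -h

theorem invOneSubPow_one_pow (n : ℕ) : invOneSubPow R 1 ^ n = invOneSubPow R n := by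
  rw [invOneSubPow_eq_inv_one_sub_pow, invOneSubPow_eq_inv_one_sub_pow, pow_one]

theorem coeff_X_pow_mul_invOneSubPow_succ (n m : ℕ) :
    coeff m ((X : R⟦X⟧) ^ n * (invOneSubPow R (n + 1)).val) = m.choose n := by
  rw [coeff_X_pow_mul', invOneSubPow_val_succ_eq_mk_add_choose]
  split_ifs with h
  · rw [coeff_mk, Nat.add_sub_cancel' h]
  · rw [Nat.choose_eq_zero_of_lt (not_le.mp h), Nat.cast_zero]

theorem coeff_invOneSubPow_one_mul_aeval (q : Polynomial R) (m : ℕ) :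
    coeff m ((invOneSubPow R 1).val * Polynomial.aeval (1 - (invOneSubPow R 1).val) q)
      = ∑ j ∈ range (m + 1), (-1) ^ j * (m.choose j : R) * q.coeff j := by
  induction q using Polynomial.induction_on' with
  | add p q hp hq =>
    simp only [map_add, mul_add, Polynomial.coeff_add, hp, hq, sum_add_distrib]
  | monomial n a =>
    have hmono : (invOneSubPow R 1).val * (1 - (invOneSubPow R 1).val) ^ n
        = C ((-1) ^ n) * (X ^ n * (invOneSubPow R (n + 1)).val) := by
      rw [one_sub_invOneSubPow_one, ← invOneSubPow_one_pow (n + 1), Units.val_pow_eq_pow_val]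
      simp only [map_pow, map_neg, map_one]
      ring
    rw [Polynomial.aeval_monomial, mul_left_comm, hmono, PowerSeries.algebraMap_apply,
      Algebra.algebraMap_self, RingHom.id_apply, ← mul_assoc, ← map_mul, coeff_C_mul,
      coeff_X_pow_mul_invOneSubPow_succ]
    simp only [Polynomial.coeff_monomial, mul_ite, mul_zero]
    rw [sum_ite_eq]
    split_ifs with h
    · ring
    · rw [mem_range] at h
      rw [Nat.choose_eq_zero_of_lt (by omega)]
      ring

noncomputable def tutteSubst : Polynomial (Polynomial R) →+* R⟦X⟧ :=
  Polynomial.eval₂RingHom (Polynomial.aeval (1 - (invOneSubPow R 1).val)).toRingHom X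

theorem coeff_invOneSubPow_one_mul_tutteSubst (P : Polynomial (Polynomial R)) (k : ℕ) :
    coeff k ((invOneSubPow R 1).val * tutteSubst P)
      = ∑ i ∈ range (k + 1), ∑ j ∈ range (k - i + 1),
          (-1) ^ j * ((k - i).choose j : R) * (P.coeff i).coeff j := by
  simp_rw [← coeff_invOneSubPow_one_mul_aeval]
  induction P using Polynomial.induction_on' with
  | add p q hp hq =>
    simp only [map_add, mul_add, Polynomial.coeff_add, hp, hq, sum_add_distrib]
  | monomial n q =>
    rw [tutteSubst, Polynomial.coe_eval₂RingHom, Polynomial.eval₂_monomial, ← mul_assoc,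
      coeff_mul_X_pow']
    simp only [Polynomial.coeff_monomial, apply_ite, map_zero, mul_zero]
    rw [sum_ite_eq]
    simp only [mem_range, Nat.lt_add_one_iff, AlgHom.toRingHom_eq_coe, RingHom.coe_coe]

theorem val_neg_inv_invOneSubPow_one : ((-(invOneSubPow R 1)⁻¹ : R⟦X⟧ˣ) : R⟦X⟧) = X - 1 := by
  rw [Units.val_neg, ← Units.inv_eq_val_inv, invOneSubPow_inv_eq_one_sub_pow, pow_one, neg_sub]

theorem tutteSubst_X_sub_one :
    tutteSubst (Polynomial.X - 1 : Polynomial (Polynomial R))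
      = ((-(invOneSubPow R 1)⁻¹ : R⟦X⟧ˣ) : R⟦X⟧) := by
  rw [val_neg_inv_invOneSubPow_one, map_sub, map_one, tutteSubst, Polynomial.coe_eval₂RingHom,
    Polynomial.eval₂_X]

theorem tutteSubst_C_X_sub_one :
    tutteSubst (Polynomial.C Polynomial.X - 1 : Polynomial (Polynomial R))
      = (((-(invOneSubPow R 1)⁻¹)⁻¹ : R⟦X⟧ˣ) : R⟦X⟧) := by
  rw [inv_neg, inv_inv, Units.val_neg, map_sub, map_one, tutteSubst, Polynomial.coe_eval₂RingHom,
    Polynomial.eval₂_C, AlgHom.toRingHom_eq_coe, RingHom.coe_coe, Polynomial.aeval_X,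
    sub_sub_cancel_left]

end Substitution

theorem sum_powerset_val_zpow_sub_card {M ι : Type*} [CommRing M] (v : Mˣ) (m : ℤ)
    (S : Finset ι) :
    ∑ A ∈ S.powerset, ((v ^ (m - #A) : Mˣ) : M) = (v ^ (m - #S) : Mˣ) * (1 + v) ^ #S := by
  rw [← sum_pow_mul_eq_add_pow, mul_sum]
  refine sum_congr rfl fun A hA => ?_
  have hsplit : v ^ (m - #A) = v ^ (m - #S) * v ^ (#S - #A) := by
    rw [← zpow_natCast, ← zpow_add, Nat.cast_sub (card_le_card (mem_powerset.mp hA))]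
    ring_nf
  rw [hsplit, Units.val_mul, Units.val_pow_eq_pow_val, one_pow, one_mul]

theorem tutteSubst_tutte {ι : Type*} (S : Finset ι) (r : Finset ι → ℤ)
    (h1 : ∀ A ⊆ S, r A ≤ r S) (h2 : ∀ A ⊆ S, r A ≤ (A.card : ℤ)) :
    tutteSubst (tutte S r)
      = ∑ A ∈ S.powerset, (((-(invOneSubPow ℤ 1)⁻¹ : ℤ⟦X⟧ˣ) ^ (r S - #A) : ℤ⟦X⟧ˣ) : ℤ⟦X⟧) := by
  rw [tutte, map_sum]
  refine sum_congr rfl fun A hA => ?_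
  have hρ := Int.toNat_of_nonneg (sub_nonneg.mpr (h1 A (mem_powerset.mp hA)))
  have hν := Int.toNat_of_nonneg (sub_nonneg.mpr (h2 A (mem_powerset.mp hA)))
  rw [map_mul, map_pow, map_pow, tutteSubst_X_sub_one, tutteSubst_C_X_sub_one,
    ← Units.val_pow_eq_pow_val, ← Units.val_pow_eq_pow_val, ← Units.val_mul, ← zpow_natCast,
    ← zpow_natCast, hρ, hν, inv_zpow', ← zpow_add]
  ring_nf

theorem stmt12_general (S : Finset α) (r : Finset α → ℤ)
    (h1 : ∀ A ⊆ S, r A ≤ r S) (h2 : ∀ A ⊆ S, r A ≤ (A.card : ℤ))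
    (k : ℕ) (hk : k < S.card) :
    ∑ i ∈ Finset.range (k + 1), ∑ j ∈ Finset.range (k - i + 1),
      (-1 : ℤ) ^ j * ((k - i).choose j : ℤ) * (((tutte S r).coeff i).coeff j) = 0 := by
  calc
    _ = coeff k ((invOneSubPow ℤ 1).val * tutteSubst (tutte S r)) :=
      (coeff_invOneSubPow_one_mul_tutteSubst _ k).symm
    _ = coeff k ((invOneSubPow ℤ 1).val *
          (((-(invOneSubPow ℤ 1)⁻¹ : ℤ⟦X⟧ˣ) ^ (r S - #S) : ℤ⟦X⟧ˣ) : ℤ⟦X⟧) * X ^ #S) := by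
      rw [tutteSubst_tutte S r h1 h2, sum_powerset_val_zpow_sub_card,
        val_neg_inv_invOneSubPow_one, add_sub_cancel, mul_assoc]
    _ = 0 := by rw [coeff_mul_X_pow', if_neg (not_le.mpr hk)]

/-- For all 0 ≤ k < n = |S|: ∑_{i=0}^{k} ∑_{j=0}^{k-i} (-1)^j C(k-i,j) b_{i,j} = 0. -/
theorem stmt12 (S : Finset α) (r : Finset α → ℤ)
    (h0 : r ∅ = 0) (h1 : ∀ A ⊆ S, r A ≤ r S) (h2 : ∀ A ⊆ S, r A ≤ (A.card : ℤ))
    (k : ℕ) (hk : k < S.card) :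
    ∑ i ∈ Finset.range (k + 1), ∑ j ∈ Finset.range (k - i + 1),
      (-1 : ℤ) ^ j * ((k - i).choose j : ℤ) * (((tutte S r).coeff i).coeff j) = 0 :=
  stmt12_general S r h1 h2 k hk
end

section
/- Let G = (S, r) be a ranked set with |S| = n and Tutte polynomial T(G; x, y) = ∑ b_{i,j} x^i y^j. Then ∑_{i=0}^{n} ∑_{j=0}^{n−i} (−1)^j C(n−i, j) b_{i,j} = (−1)^{n − r(S)}. -/
/-
Expanding the Tutte polynomial over subsets, a subset A with a = r(S) - r(A) and
b = |A| - r(A) contributes the weighted coefficient sum of (x - 1)^a (y - 1)^b. Vandermonde's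
identity in j, followed by the Chu–Vandermonde identity with the negative upper index -(b + 1),
collapses this to ±choose(a - b - 1, n), a generalized binomial coefficient depending on A only
through a - b = r(S) - |A|. The alternating sum over A of choose(c - |A|, n) is the n-th finite
difference of the degree-n polynomial c ↦ choose(c, n), hence equals 1.
-/

open Finset

variable {α : Type*} [DecidableEq α]

open Polynomial

lemma coeff_X_sub_one_pow {R : Type*} [CommRing R] (a i : ℕ) :
    ((X - 1 : R[X]) ^ a).coeff i = (-1) ^ (a - i) * a.choose i := by
  rw [sub_eq_add_neg, ← map_one C, ← map_neg, coeff_X_add_C_pow]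

lemma coeff_coeff_X_sub_one_pow_mul_C_X_sub_one_pow {R : Type*} [CommRing R] (a b i j : ℕ) :
    (((X - 1 : R[X][X]) ^ a * (C X - 1) ^ b).coeff i).coeff j =
      (-1 : R) ^ (a - i) * a.choose i * ((-1) ^ (b - j) * b.choose j) := by
  have hb : (C X - 1 : R[X][X]) ^ b = C ((X - 1) ^ b) := by simp
  have ha : ((-1) ^ (a - i) * a.choose i : R[X]) = C ((-1 : R) ^ (a - i) * a.choose i) := by
    simp
  rw [hb, coeff_mul_C, coeff_X_sub_one_pow, ha, coeff_C_mul, coeff_X_sub_one_pow]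

noncomputable def alternatingChooseSum (n : ℕ) : ℤ[X][X] →+ ℤ where
  toFun P := ∑ i ∈ range (n + 1), ∑ j ∈ range (n - i + 1),
    (-1) ^ j * ((n - i).choose j : ℤ) * (P.coeff i).coeff j
  map_zero' := by simp
  map_add' P Q := by simp only [coeff_add, mul_add, sum_add_distrib]

lemma sum_range_choose_mul_choose (m b : ℕ) :
    ∑ j ∈ range (m + 1), m.choose j * b.choose j = (m + b).choose b := by
  rw [Nat.add_comm m b, Nat.choose_symm_add, Nat.add_choose_eq,
    Nat.sum_antidiagonal_eq_sum_range_succ_mk]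
  refine sum_congr rfl fun j hj => ?_
  rw [Nat.choose_symm (Nat.lt_succ_iff.mp (mem_range.mp hj)), mul_comm]

lemma sum_range_neg_one_pow_mul_choose_mul_choose (m b : ℕ) :
    ∑ j ∈ range (m + 1), (-1) ^ j * (m.choose j : ℤ) * ((-1) ^ (b - j) * b.choose j) =
      (-1) ^ b * (m + b).choose b := by
  rw [← sum_range_choose_mul_choose, Nat.cast_sum, mul_sum]
  refine sum_congr rfl fun j _ => ?_
  rcases le_or_gt j b with h | h
  · rw [← Nat.add_sub_cancel' h, pow_add, Nat.add_sub_cancel_left]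
    push_cast
    ring
  · simp [Nat.choose_eq_zero_of_lt h]

lemma ring_choose_sub_succ_eq_sum (a b n : ℕ) :
    Ring.choose ((a : ℤ) - (b + 1)) n =
      ∑ i ∈ range (n + 1), (a.choose i : ℤ) * ((-1) ^ (n - i) * (n - i + b).choose b) := by
  rw [sub_eq_add_neg, Ring.add_choose_eq n (Commute.all _ _),
    Nat.sum_antidiagonal_eq_sum_range_succ_mk]
  refine sum_congr rfl fun i _ => ?_
  rw [Ring.choose_natCast, Ring.choose_neg, Units.smul_def, Int.coe_negOnePow_natCast,
    show (b : ℤ) + 1 + (n - i : ℕ) - 1 = (n - i + b : ℕ) by push_cast; ring, Ring.choose_natCast,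
    Nat.choose_symm_add]
  rfl

lemma alternatingChooseSum_X_sub_one_pow_mul (n a b : ℕ) :
    alternatingChooseSum n ((X - 1) ^ a * (C X - 1) ^ b) =
      (-1) ^ (a + b + n) * Ring.choose ((a : ℤ) - (b + 1)) n := by
  simp only [alternatingChooseSum, AddMonoidHom.coe_mk, ZeroHom.coe_mk,
    coeff_coeff_X_sub_one_pow_mul_C_X_sub_one_pow]
  rw [ring_choose_sub_succ_eq_sum, mul_sum]
  refine sum_congr rfl fun i hi => ?_
  have hin : i ≤ n := Nat.lt_succ_iff.mp (mem_range.mp hi)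
  have hinner : ∑ j ∈ range (n - i + 1), (-1) ^ j * ((n - i).choose j : ℤ) *
      ((-1) ^ (a - i) * a.choose i * ((-1) ^ (b - j) * b.choose j)) =
      (-1) ^ (a - i) * a.choose i * ((-1) ^ b * (n - i + b).choose b) := by
    rw [← sum_range_neg_one_pow_mul_choose_mul_choose, mul_sum]
    exact sum_congr rfl fun j _ => by ring
  rw [hinner]
  rcases le_or_gt i a with h | h
  · have hsign : (-1 : ℤ) ^ (a - i) * (-1) ^ b = (-1) ^ (a + b + n) * (-1) ^ (n - i) := by
      rw [← pow_add, ← pow_add]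
      exact neg_one_pow_congr (by rw [Nat.even_iff, Nat.even_iff]; omega)
    linear_combination (a.choose i * (n - i + b).choose b : ℤ) * hsign
  · simp [Nat.choose_eq_zero_of_lt h]

lemma sum_powerset_neg_one_pow_mul_choose (s : Finset α) (c : ℤ) :
    ∑ A ∈ s.powerset, (-1) ^ A.card * Ring.choose (c - A.card) s.card = 1 := by
  induction s using Finset.induction_on generalizing c with
  | empty => simp
  | insert x s hx ih =>
    rw [sum_powerset_insert hx, card_insert_of_notMem hx, ← sum_add_distrib]
    refine (sum_congr rfl fun A hA => ?_).trans (ih (c - 1))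
    rw [card_insert_of_notMem fun h => hx (mem_powerset.mp hA h)]
    have hpascal : Ring.choose (c - A.card) (s.card + 1) =
        Ring.choose (c - 1 - A.card) s.card + Ring.choose (c - 1 - A.card) (s.card + 1) := by
      convert Ring.choose_succ_succ (c - 1 - A.card) s.card using 2
      ring
    push_cast
    rw [hpascal, show c - (A.card + 1) = c - 1 - A.card by ring, pow_succ]
    ring

/-- The k = n case: ∑_{i=0}^{n} ∑_{j=0}^{n-i} (-1)^j C(n-i,j) b_{i,j} = (-1)^{n - r(S)}. -/
theorem stmt13 (S : Finset α) (r : Finset α → ℤ)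
    (h0 : r ∅ = 0) (h1 : ∀ A ⊆ S, r A ≤ r S) (h2 : ∀ A ⊆ S, r A ≤ (A.card : ℤ)) :
    ∑ i ∈ Finset.range (S.card + 1), ∑ j ∈ Finset.range (S.card - i + 1),
      (-1 : ℤ) ^ j * ((S.card - i).choose j : ℤ) * (((tutte S r).coeff i).coeff j) =
      (-1 : ℤ) ^ (((S.card : ℤ) - r S).toNat) := by
  obtain ⟨ρ, hρ⟩ : ∃ ρ : ℕ, r S = ρ := ⟨(r S).toNat, by have := h1 ∅ (empty_subset S); omega⟩
  have hρS : ρ ≤ S.card := by have := h2 S subset_rfl; omega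
  have hterm : ∀ A ∈ S.powerset, alternatingChooseSum S.card ((X - 1) ^ (r S - r A).toNat *
      (C X - 1) ^ ((A.card : ℤ) - r A).toNat) =
      (-1) ^ (ρ + S.card) * ((-1) ^ A.card * Ring.choose ((ρ - 1 : ℤ) - A.card) S.card) := by
    intro A hA
    have hrA := h1 A (mem_powerset.mp hA)
    have hrA' := h2 A (mem_powerset.mp hA)
    rw [alternatingChooseSum_X_sub_one_pow_mul, ← mul_assoc, ← pow_add]
    congr 1
    · exact neg_one_pow_congr (by rw [Nat.even_iff, Nat.even_iff]; omega)
    · congr 1; omega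
  calc _ = alternatingChooseSum S.card (tutte S r) := rfl
    _ = (-1) ^ (ρ + S.card) := by
      rw [tutte, map_sum, sum_congr rfl hterm, ← mul_sum, sum_powerset_neg_one_pow_mul_choose,
        mul_one]
    _ = _ := neg_one_pow_congr (by rw [Nat.even_iff, Nat.even_iff]; omega)
end

section
/- Let M be a matroid of rank r on a ground set of n elements with Tutte polynomial T(M; x, y) = ∑ b_{i,j} x^i y^j (defined via corank-nullity: T(M; x, y) = ∑_{A ⊆ E} (x−1)^{r(E)−r(A)}(y−1)^{|A|−r(A)}). Then ∑_{i=0}^{n} ∑_{j=0}^{n−i} (−1)^j C(n−i, j) b_{i,j} = (−1)^{n−r}. -/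
/-!
On the hyperbola `(x - 1) * (y - 1) = 1` each corank-nullity term
`(x-1)^(r(E)-r(A)) (y-1)^(|A|-r(A))` equals `(x-1)^r(E) (y-1)^|A|`, so summing over `A`
gives `T(M; x, y) = (x - 1)^r(E) * y^n` there. Since
`(-1)^j C(n-i, j) = [u^n] u^i (-u)^j (1-u)^(-j-1)` for `i ≤ n`, the alternating binomial sum is
the linear functional `f ↦ [u^n] f(u, -u/(1-u)) / (1-u)`, and the point `(u, -u/(1-u))` lies on
that hyperbola (in `ℤ⟦u⟧`, `1/(1-u)` is `PowerSeries.mk 1`). Hence the sum is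
`[u^n] (u - 1)^r (-u)^n (1-u)^(-n-1) = (-1)^(n+r)`.
-/

open Finset

variable {α : Type*} [DecidableEq α]

section RankFunction

variable {S A C : Finset α} {r : Finset α → ℤ}

theorem rank_le_rank_union (hincr : ∀ A ⊆ S, ∀ p ∈ S, r A ≤ r (insert p A))
    (hA : A ⊆ S) (hC : C ⊆ S) : r A ≤ r (A ∪ C) := by
  induction C using Finset.induction_on with
  | empty => simp
  | insert p C _ ih =>
    have hCS := (subset_insert p C).trans hC
    rw [union_insert]
    exact (ih hCS).trans (hincr _ (union_subset hA hCS) p (hC (mem_insert_self p C)))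

theorem rank_union_le_add_card (hunit : ∀ A ⊆ S, ∀ p ∈ S, r (insert p A) ≤ r A + 1)
    (hA : A ⊆ S) (hC : C ⊆ S) : r (A ∪ C) ≤ r A + #C := by
  induction C using Finset.induction_on with
  | empty => simp
  | insert p C hp ih =>
    have hCS := (subset_insert p C).trans hC
    have := hunit _ (union_subset hA hCS) p (hC (mem_insert_self p C))
    rw [union_insert, card_insert_of_notMem hp]
    push_cast
    linarith [ih hCS]

theorem rank_le_rank_of_subset (hincr : ∀ A ⊆ S, ∀ p ∈ S, r A ≤ r (insert p A))
    (hA : A ⊆ S) : r A ≤ r S := by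
  simpa [union_sdiff_of_subset hA] using rank_le_rank_union hincr hA (sdiff_subset (t := A))

theorem rank_le_card_of_subset (h0 : r ∅ = 0)
    (hunit : ∀ A ⊆ S, ∀ p ∈ S, r (insert p A) ≤ r A + 1) (hA : A ⊆ S) : r A ≤ #A := by
  simpa [h0] using rank_union_le_add_card hunit (empty_subset S) hA

end RankFunction

open Polynomial in
theorem tutte_eval₂_of_mul_eq_one {ι R : Type*} [CommRing R] {x y : R}
    (hxy : (x - 1) * (y - 1) = 1) {S : Finset ι} {r : Finset ι → ℤ}
    (hnonneg : ∀ A ⊆ S, 0 ≤ r A) (hmono : ∀ A ⊆ S, r A ≤ r S)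
    (hcard : ∀ A ⊆ S, r A ≤ #A) :
    (tutte S r).eval₂ (eval₂RingHom (Int.castRingHom R) y) x =
      (x - 1) ^ (r S).toNat * y ^ #S := by
  rw [← sub_add_cancel y 1, ← sum_pow_mul_eq_add_pow, mul_sum, tutte, eval₂_finsetSum]
  refine sum_congr rfl fun A hA => ?_
  rw [mem_powerset] at hA
  obtain ⟨k, hk⟩ := Int.eq_ofNat_of_zero_le (hnonneg A hA)
  have hS : (r S).toNat = (r S - r A).toNat + k := by have := hmono A hA; omega
  have hA' : #A = ((#A : ℤ) - r A).toNat + k := by have := hcard A hA; omega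
  simp only [eval₂_mul, eval₂_pow, eval₂_sub, eval₂_X, eval₂_one, eval₂_C,
    coe_eval₂RingHom, one_pow, mul_one, sub_add_cancel]
  conv_rhs => rw [hS, hA', pow_add, pow_add, mul_mul_mul_comm, ← mul_pow, hxy, one_pow, mul_one]

section AlternatingSum

open PowerSeries

variable {R : Type*} [CommRing R]

theorem coeff_X_pow_mul_neg_X_mul_mk_one_pow_mul_mk_one (n i j : ℕ) :
    coeff n (X ^ i * (-X * PowerSeries.mk 1) ^ j * PowerSeries.mk 1 : R⟦X⟧) =
      if i ≤ n then (-1) ^ j * ((n - i).choose j : R) else 0 := by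
  have : (X ^ i * (-X * PowerSeries.mk 1) ^ j * PowerSeries.mk 1 : R⟦X⟧) =
      C ((-1) ^ j) * (X ^ (i + j) * PowerSeries.mk 1 ^ (j + 1)) := by
    simp only [map_pow, map_neg, map_one]
    ring
  rw [this, coeff_C_mul, coeff_X_pow_mul', mk_one_pow_eq_mk_choose_add, coeff_mk]
  split_ifs with hij hi hi'
  · rw [show j + (n - (i + j)) = n - i by omega]
  · omega
  · rw [Nat.choose_eq_zero_of_lt (by omega), Nat.cast_zero, mul_zero]
  · rw [mul_zero]

theorem sum_neg_one_pow_mul_choose_mul_coeff_coeff (n : ℕ) (f : Polynomial (Polynomial R)) :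
    ∑ i ∈ range (n + 1), ∑ j ∈ range (n - i + 1),
      (-1 : R) ^ j * ((n - i).choose j : R) * ((f.coeff i).coeff j) =
      coeff n (f.eval₂ (Polynomial.eval₂RingHom C (-X * PowerSeries.mk 1)) X *
        PowerSeries.mk 1) := by
  induction f using Polynomial.induction_on' with
  | add f g hf hg =>
    simp only [Polynomial.coeff_add, mul_add, sum_add_distrib, hf, hg, Polynomial.eval₂_add,
      add_mul, map_add]
  | monomial i g =>
    induction g using Polynomial.induction_on' with
    | add g h hg hh =>
      simp only [map_add, Polynomial.coeff_add, mul_add, sum_add_distrib, hg, hh,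
        Polynomial.eval₂_add, add_mul]
    | monomial j c =>
      have hmon : (Polynomial.monomial i (Polynomial.monomial j c)).eval₂
          (Polynomial.eval₂RingHom C (-X * PowerSeries.mk 1)) X * PowerSeries.mk 1 =
          C c * (X ^ i * (-X * PowerSeries.mk 1) ^ j * PowerSeries.mk 1 : R⟦X⟧) := by
        simp only [Polynomial.eval₂_monomial, Polynomial.coe_eval₂RingHom]
        ring
      rw [hmon, coeff_C_mul, coeff_X_pow_mul_neg_X_mul_mk_one_pow_mul_mk_one]
      simp only [Polynomial.coeff_monomial, apply_ite Polynomial.coeff, ite_apply,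
        Polynomial.coeff_zero, mul_ite, mul_zero, sum_ite_irrel, sum_const_zero, sum_ite_eq,
        mem_range, Nat.lt_succ_iff]
      split_ifs with hi hj
      · ring
      · simp [Nat.choose_eq_zero_of_lt (by omega : n - i < j)]
      · rfl

theorem X_sub_one_mul_neg_X_mul_mk_one_sub_one :
    (X - 1) * (-X * PowerSeries.mk 1 - 1 : R⟦X⟧) = 1 := by
  linear_combination (X : R⟦X⟧) * mk_one_mul_one_sub_eq_one R

theorem coeff_X_sub_one_pow_mul_neg_X_mul_mk_one_pow_mul_mk_one (n k : ℕ) :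
    coeff n ((X - 1) ^ k * (-X * PowerSeries.mk 1) ^ n * PowerSeries.mk 1 : R⟦X⟧) =
      (-1) ^ (n + k) := by
  have : ((X - 1) ^ k * (-X * PowerSeries.mk 1) ^ n * PowerSeries.mk 1 : R⟦X⟧) =
      X ^ n * ((-1) ^ n * (X - 1) ^ k * PowerSeries.mk 1 ^ (n + 1)) := by
    ring
  rw [this, coeff_X_pow_mul', if_pos le_rfl, Nat.sub_self, coeff_zero_eq_constantCoeff_apply]
  simp [pow_add]

end AlternatingSum

theorem stmt14_general (S : Finset α) (r : Finset α → ℤ)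
    (hnonneg : ∀ A, 0 ≤ r A)
    (h0 : r ∅ = 0)
    (hunit : ∀ A ⊆ S, ∀ p ∈ S, r A ≤ r (insert p A) ∧ r (insert p A) ≤ r A + 1) :
    ∑ i ∈ Finset.range (S.card + 1), ∑ j ∈ Finset.range (S.card - i + 1),
      (-1 : ℤ) ^ j * ((S.card - i).choose j : ℤ) * (((tutte S r).coeff i).coeff j) =
      (-1 : ℤ) ^ (((S.card : ℤ) - r S).toNat) := by
  have hmono : ∀ A ⊆ S, r A ≤ r S := fun A =>
    rank_le_rank_of_subset fun B hB p hp => (hunit B hB p hp).1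
  have hcard : ∀ A ⊆ S, r A ≤ #A := fun A =>
    rank_le_card_of_subset h0 fun B hB p hp => (hunit B hB p hp).2
  rw [sum_neg_one_pow_mul_choose_mul_coeff_coeff, RingHom.ext_int PowerSeries.C (Int.castRingHom _),
    tutte_eval₂_of_mul_eq_one X_sub_one_mul_neg_X_mul_mk_one_sub_one (fun A _ => hnonneg A) hmono
      hcard, coeff_X_sub_one_pow_mul_neg_X_mul_mk_one_pow_mul_mk_one]
  have hrS := hcard S subset_rfl
  have hrS₀ := hnonneg S
  rw [show ((#S : ℤ) - r S).toNat = #S - (r S).toNat by omega,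
    show #S + (r S).toNat = #S - (r S).toNat + 2 * (r S).toNat by omega,
    pow_add, pow_mul, neg_one_sq, one_pow, mul_one]

/-- For a matroid M of rank r on n points (rank axioms: normalization, unit
rank increase, semimodularity, nonnegativity):
∑_{i=0}^{n} ∑_{j=0}^{n-i} (-1)^j C(n-i,j) b_{i,j} = (-1)^{n-r}. -/
theorem stmt14 (S : Finset α) (r : Finset α → ℤ)
    (hnonneg : ∀ A, 0 ≤ r A)
    (h0 : r ∅ = 0)
    (hunit : ∀ A ⊆ S, ∀ p ∈ S, r A ≤ r (insert p A) ∧ r (insert p A) ≤ r A + 1)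
    (hsubmod : ∀ A ⊆ S, ∀ B ⊆ S, r (A ∩ B) + r (A ∪ B) ≤ r A + r B) :
    ∑ i ∈ Finset.range (S.card + 1), ∑ j ∈ Finset.range (S.card - i + 1),
      (-1 : ℤ) ^ j * ((S.card - i).choose j : ℤ) * (((tutte S r).coeff i).coeff j) =
      (-1 : ℤ) ^ (((S.card : ℤ) - r S).toNat) :=
  stmt14_general S r hnonneg h0 hunit
end

section
/- Let G be an antimatroid on an n-element set, and let f_i denote the number of free convex sets of size i (convex sets with empty interior), with f_0 = 1 counting the empty set. Then ∑_{i=0}^{n} (−1)^i f_i = 0 (assuming n ≥ 1). -/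
open Finset

variable {α : Type*} [DecidableEq α]

/-- The convex sets: complements (in S) of feasible sets. -/
def convexSets (S : Finset α) (F : Finset (Finset α)) : Finset (Finset α) :=
  S.powerset.filter (fun C => S \ C ∈ F)

/-- The convex closure of A: the intersection of all convex sets containing A. -/
def convClosure (S : Finset α) (F : Finset (Finset α)) (A : Finset α) : Finset α :=
  S.filter (fun x => ∀ C ∈ convexSets S F, A ⊆ C → x ∈ C)

/-- The extreme points of a convex set C: points p ∈ C not in the convex
closure of C \ {p}. -/
def extremePts (S : Finset α) (F : Finset (Finset α)) (C : Finset α) : Finset α :=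
  C.filter (fun p => p ∉ convClosure S F (C \ {p}))

/-- The convInterior of C: int(C) = C \ ex(C). -/
def convInterior (S : Finset α) (F : Finset (Finset α)) (C : Finset α) : Finset α :=
  C \ extremePts S F C

/-- The number of free convex sets (empty convInterior) of size i. -/
def freeCount (S : Finset α) (F : Finset (Finset α)) (i : ℕ) : ℕ :=
  ((convexSets S F).filter (fun C => C.card = i ∧ convInterior S F C = ∅)).card

section Aux

variable {S : Finset α} {F : Finset (Finset α)}

lemma mem_convexSets {C : Finset α} :
    C ∈ convexSets S F ↔ C ⊆ S ∧ S \ C ∈ F := by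
  simp [convexSets]

lemma mem_convClosure {A : Finset α} {x : α} :
    x ∈ convClosure S F A ↔ x ∈ S ∧ ∀ C ∈ convexSets S F, A ⊆ C → x ∈ C := by
  simp [convClosure]

lemma subset_convClosure (hA : A ⊆ S) : A ⊆ convClosure S F A := by
  intro x hx
  exact mem_convClosure.2 ⟨hA hx, fun C _ hAC => hAC hx⟩

lemma convClosure_subset {A C : Finset α} (hC : C ∈ convexSets S F) (h : A ⊆ C) :
    convClosure S F A ⊆ C := fun x hx => (mem_convClosure.1 hx).2 C hC h

lemma convClosure_mono {A B : Finset α} (h : A ⊆ B) :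
    convClosure S F A ⊆ convClosure S F B := by
  intro x hx
  rw [mem_convClosure] at hx ⊢
  exact ⟨hx.1, fun C hC hBC => hx.2 C hC (h.trans hBC)⟩

lemma full_mem_convexSets (hempty : ∅ ∈ F) : S ∈ convexSets S F := by
  rw [mem_convexSets]
  simp [hempty]

/-- complement of convClosure is feasible -/
lemma sdiff_convClosure_mem (hempty : ∅ ∈ F)
    (hunion : ∀ B ∈ F, ∀ B' ∈ F, B ∪ B' ∈ F) {A : Finset α} :
    S \ convClosure S F A ∈ F := by
  classical
  set T := (convexSets S F).filter (fun C => A ⊆ C) with hT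
  have hEq : S \ convClosure S F A = T.sup (fun C => S \ C) := by
    ext x
    simp only [mem_sdiff, mem_convClosure, Finset.mem_sup, hT, mem_filter]
    constructor
    · rintro ⟨hxS, h⟩
      push_neg at h
      obtain ⟨C, hC, hAC, hxC⟩ := h hxS
      exact ⟨C, ⟨hC, hAC⟩, hxS, hxC⟩
    · rintro ⟨C, ⟨hC, hAC⟩, hxS, hxC⟩
      exact ⟨hxS, fun h => hxC (h.2 C hC hAC)⟩
  rw [hEq]
  apply Finset.sup_induction
  · simpa using hempty
  · intro a ha b hb; exact hunion a ha b hb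
  · intro C hC
    rw [hT, mem_filter, mem_convexSets] at hC
    exact hC.1.2

lemma convClosure_mem (hempty : ∅ ∈ F)
    (hunion : ∀ B ∈ F, ∀ B' ∈ F, B ∪ B' ∈ F) {A : Finset α} :
    convClosure S F A ∈ convexSets S F := by
  rw [mem_convexSets]
  exact ⟨Finset.filter_subset _ _, sdiff_convClosure_mem hempty hunion⟩

/-- step-finding along a feasible chain -/
lemma find_step (hunion : ∀ B ∈ F, ∀ B' ∈ F, B ∪ B' ∈ F)
    {A : Finset α} (hA : A ∈ F) :
    ∀ l : List α, (∀ t ∈ l.tails, t.toFinset ∈ F) → ¬ (l.toFinset ⊆ A) →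
      ∃ y ∈ l.toFinset, y ∉ A ∧ A ∪ {y} ∈ F := by
  intro l
  induction l with
  | nil => intro _ h; simp at h
  | cons y t ih =>
    intro htails hns
    by_cases hsub : t.toFinset ⊆ A
    · have hyA : y ∉ A := by
        intro hy
        apply hns
        intro z hz
        rw [List.toFinset_cons, mem_insert] at hz
        rcases hz with rfl | hz
        · exact hy
        · exact hsub hz
      refine ⟨y, by simp, hyA, ?_⟩
      have h1 : (y :: t).toFinset ∈ F := htails _ (by simp [List.tails_cons])
      have h2 := hunion A hA _ h1
      have : A ∪ (y :: t).toFinset = A ∪ {y} := by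
        ext z
        simp only [List.toFinset_cons, mem_union, mem_insert, mem_singleton]
        constructor
        · rintro (h | rfl | h)
          · exact Or.inl h
          · exact Or.inr rfl
          · exact Or.inl (hsub h)
        · rintro (h | rfl)
          · exact Or.inl h
          · exact Or.inr (Or.inl rfl)
      rwa [this] at h2
    · obtain ⟨z, hz, hzA, hF⟩ := ih (fun s hs => htails s (by simp [List.tails_cons, hs])) hsub
      exact ⟨z, by simp [hz], hzA, hF⟩

lemma chain_exists (hacc : ∀ B ∈ F, B.Nonempty → ∃ x ∈ B, B \ {x} ∈ F) :
    ∀ n (B : Finset α), B ∈ F → B.card = n →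
      ∃ l : List α, l.toFinset = B ∧ ∀ t ∈ l.tails, t.toFinset ∈ F := by
  intro n
  induction n with
  | zero =>
    intro B hB hcard
    rw [Finset.card_eq_zero] at hcard
    subst hcard
    exact ⟨[], by simp, by simpa using hB⟩
  | succ n ih =>
    intro B hB hcard
    have hne : B.Nonempty := by rw [← Finset.card_pos, hcard]; omega
    obtain ⟨x, hxB, hBx⟩ := hacc B hB hne
    obtain ⟨l, hl, hlt⟩ := ih (B \ {x}) hBx (by rw [Finset.card_sdiff_of_subset (by simpa using hxB)]; simp [hcard])
    refine ⟨x :: l, ?_, ?_⟩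
    · rw [List.toFinset_cons, hl]
      ext z
      simp only [mem_insert, mem_sdiff, mem_singleton]
      constructor
      · rintro (rfl | ⟨h, _⟩) <;> assumption
      · intro h
        by_cases hzx : z = x
        · exact Or.inl hzx
        · exact Or.inr ⟨h, hzx⟩
    · intro t ht
      rw [List.tails_cons] at ht
      rcases List.mem_cons.1 ht with rfl | ht
      · rw [List.toFinset_cons, hl]
        have : insert x (B \ {x}) = B := by
          ext z; simp only [mem_insert, mem_sdiff, mem_singleton]
          constructor
          · rintro (rfl | ⟨h, _⟩) <;> assumption
          · intro h
            by_cases hzx : z = x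
            · exact Or.inl hzx
            · exact Or.inr ⟨h, hzx⟩
        rw [this]; exact hB
      · exact hlt t ht

/-- antimatroid exchange: augment a feasible set within a larger one -/
lemma exchange (hacc : ∀ B ∈ F, B.Nonempty → ∃ x ∈ B, B \ {x} ∈ F)
    (hunion : ∀ B ∈ F, ∀ B' ∈ F, B ∪ B' ∈ F)
    {A B : Finset α} (hA : A ∈ F) (hB : B ∈ F) (hAB : A ⊆ B) (hne : A ≠ B) :
    ∃ y ∈ B, y ∉ A ∧ A ∪ {y} ∈ F := by
  obtain ⟨l, hl, hlt⟩ := chain_exists hacc B.card B hB rfl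
  have hns : ¬ (l.toFinset ⊆ A) := by
    rw [hl]
    intro h
    exact hne (Finset.Subset.antisymm hAB h)
  obtain ⟨y, hy, hyA, hF⟩ := find_step hunion hA l hlt hns
  exact ⟨y, hl ▸ hy, hyA, hF⟩

end Aux


section Key

variable {S : Finset α} {F : Finset (Finset α)}

lemma conv_eq_iff (hempty : ∅ ∈ F)
    (hacc : ∀ B ∈ F, B.Nonempty → ∃ x ∈ B, B \ {x} ∈ F)
    (hunion : ∀ B ∈ F, ∀ B' ∈ F, B ∪ B' ∈ F)
    {K A : Finset α} (hK : K ∈ convexSets S F) (hA : A ⊆ S) :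
    convClosure S F A = K ↔ extremePts S F K ⊆ A ∧ A ⊆ K := by
  constructor
  · rintro rfl
    refine ⟨?_, subset_convClosure hA⟩
    intro p hp
    rw [extremePts, mem_filter] at hp
    by_contra hpA
    have hAK : A ⊆ convClosure S F A \ {p} := by
      intro z hz
      rw [mem_sdiff, mem_singleton]
      exact ⟨subset_convClosure hA hz, fun h => hpA (h ▸ hz)⟩
    exact hp.2 (convClosure_mono hAK hp.1)
  · rintro ⟨hEA, hAK⟩
    have hDK : convClosure S F A ⊆ K := convClosure_subset hK hAK
    by_contra hne
    set D := convClosure S F A with hD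
    have hDc : D ∈ convexSets S F := convClosure_mem hempty hunion
    have h1 : S \ K ⊆ S \ D := sdiff_subset_sdiff (le_refl S) hDK
    have h2 : S \ K ≠ S \ D := by
      intro h
      apply hne
      have := congrArg (fun X => S \ X) h
      simpa [sdiff_sdiff_right_self, inf_eq_inter,
        Finset.inter_eq_right.2 (mem_convexSets.1 hK).1,
        Finset.inter_eq_right.2 (mem_convexSets.1 hDc).1] using this.symm
    obtain ⟨y, hy, hyK, hF⟩ := exchange hacc hunion (mem_convexSets.1 hK).2
      (mem_convexSets.1 hDc).2 h1 h2
    rw [mem_sdiff] at hy hyK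
    push_neg at hyK
    have hyS : y ∈ S := hy.1
    have hyKmem : y ∈ K := hyK hyS
    have hconv : K \ {y} ∈ convexSets S F := by
      rw [mem_convexSets]
      constructor
      · exact (sdiff_subset).trans (mem_convexSets.1 hK).1
      · have : S \ (K \ {y}) = S \ K ∪ {y} := by
          ext z
          simp only [mem_sdiff, mem_union, mem_singleton]
          constructor
          · rintro ⟨hzS, hz⟩
            by_cases hzy : z = y
            · exact Or.inr hzy
            · exact Or.inl ⟨hzS, fun hzK => hz ⟨hzK, hzy⟩⟩
          · rintro (⟨hzS, hzK⟩ | rfl)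
            · exact ⟨hzS, fun h => hzK h.1⟩
            · exact ⟨hyS, fun h => h.2 rfl⟩
        rw [this]
        exact hF
    have hyE : y ∈ extremePts S F K := by
      rw [extremePts, mem_filter]
      refine ⟨hyKmem, fun h => ?_⟩
      have := convClosure_subset hconv (le_refl _) h
      simp at this
    exact hy.2 (subset_convClosure hA (hEA hyE))

lemma fiber_sum (hempty : ∅ ∈ F)
    (hacc : ∀ B ∈ F, B.Nonempty → ∃ x ∈ B, B \ {x} ∈ F)
    (hunion : ∀ B ∈ F, ∀ B' ∈ F, B ∪ B' ∈ F)
    {K : Finset α} (hK : K ∈ convexSets S F) :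
    ∑ A ∈ S.powerset.filter (fun A => convClosure S F A = K), (-1 : ℤ) ^ A.card
      = if convInterior S F K = ∅ then (-1 : ℤ) ^ K.card else 0 := by
  set E := extremePts S F K with hE
  have hEK : E ⊆ K := filter_subset _ _
  have hKS : K ⊆ S := (mem_convexSets.1 hK).1
  have key : ∑ A ∈ S.powerset.filter (fun A => convClosure S F A = K), (-1 : ℤ) ^ A.card
      = ∑ B ∈ (convInterior S F K).powerset, (-1 : ℤ) ^ (E.card + B.card) := by
    refine Finset.sum_nbij' (fun A => A \ E) (fun B => E ∪ B) ?_ ?_ ?_ ?_ ?_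
    · intro A hA
      rw [mem_filter, mem_powerset] at hA
      rw [mem_powerset]
      have := (conv_eq_iff hempty hacc hunion hK hA.1).1 hA.2
      exact sdiff_subset_sdiff this.2 (le_refl E)
    · intro B hB
      rw [mem_powerset] at hB
      rw [mem_filter, mem_powerset]
      have hBK : B ⊆ K := hB.trans sdiff_subset
      have hsub : E ∪ B ⊆ K := union_subset hEK hBK
      refine ⟨hsub.trans hKS, ?_⟩
      rw [conv_eq_iff hempty hacc hunion hK (hsub.trans hKS)]
      exact ⟨subset_union_left, hsub⟩
    · intro A hA
      rw [mem_filter, mem_powerset] at hA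
      have := (conv_eq_iff hempty hacc hunion hK hA.1).1 hA.2
      exact union_sdiff_of_subset this.1
    · intro B hB
      rw [mem_powerset] at hB
      show (E ∪ B) \ E = B
      rw [union_sdiff_cancel_left]
      rw [disjoint_left]
      intro a haE haB
      exact ((mem_sdiff.1 (hB haB)).2) haE
    · intro A hA
      rw [mem_filter, mem_powerset] at hA
      have hEA : E ⊆ A := ((conv_eq_iff hempty hacc hunion hK hA.1).1 hA.2).1
      show (-1 : ℤ) ^ A.card = (-1 : ℤ) ^ (E.card + (A \ E).card)
      congr 1
      have := Finset.card_sdiff_add_card_eq_card hEA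
      omega
  rw [key]
  have : ∑ B ∈ (convInterior S F K).powerset, (-1 : ℤ) ^ (E.card + B.card)
      = (-1 : ℤ) ^ E.card * ∑ B ∈ (convInterior S F K).powerset, (-1 : ℤ) ^ B.card := by
    rw [Finset.mul_sum]
    exact Finset.sum_congr rfl (fun B _ => by rw [pow_add])
  rw [this, Finset.sum_powerset_neg_one_pow_card]
  by_cases h : convInterior S F K = ∅
  · have hKE : K = E := by
      rw [convInterior] at h
      have := sdiff_eq_empty_iff_subset.1 h
      exact Finset.Subset.antisymm this hEK
    simp [h, hKE]
  · simp [h]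

end Key

/-- For an antimatroid on n ≥ 1 elements, ∑_{i=0}^{n} (-1)^i f_i = 0, where
f_i is the number of free convex sets of size i. -/
theorem stmt18 (S : Finset α) (F : Finset (Finset α))
    (hsub : ∀ B ∈ F, B ⊆ S) (hempty : ∅ ∈ F) (hfull : S ∈ F)
    (hacc : ∀ B ∈ F, B.Nonempty → ∃ x ∈ B, B \ {x} ∈ F)
    (hunion : ∀ B ∈ F, ∀ B' ∈ F, B ∪ B' ∈ F)
    (hn : 1 ≤ S.card) :
    ∑ i ∈ Finset.range (S.card + 1), (-1 : ℤ) ^ i * (freeCount S F i : ℤ) = 0 := by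
  classical
  have hSne : S ≠ ∅ := by
    intro h
    rw [h] at hn
    simp at hn
  have h0 : ∑ A ∈ S.powerset, (-1 : ℤ) ^ A.card = 0 := by
    rw [Finset.sum_powerset_neg_one_pow_card]
    simp [hSne]
  have h1 : ∑ K ∈ convexSets S F,
      ∑ A ∈ S.powerset.filter (fun A => convClosure S F A = K), (-1 : ℤ) ^ A.card
      = ∑ A ∈ S.powerset, (-1 : ℤ) ^ A.card :=
    Finset.sum_fiberwise_of_maps_to (fun A _ => convClosure_mem hempty hunion) _
  have h2 : ∑ K ∈ convexSets S F,
      (if convInterior S F K = ∅ then (-1 : ℤ) ^ K.card else 0) = 0 := by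
    calc ∑ K ∈ convexSets S F, (if convInterior S F K = ∅ then (-1 : ℤ) ^ K.card else 0)
        = ∑ K ∈ convexSets S F,
          ∑ A ∈ S.powerset.filter (fun A => convClosure S F A = K), (-1 : ℤ) ^ A.card :=
          Finset.sum_congr rfl (fun K hK => (fiber_sum hempty hacc hunion hK).symm)
      _ = ∑ A ∈ S.powerset, (-1 : ℤ) ^ A.card := h1
      _ = 0 := h0
  have h3 : ∑ K ∈ (convexSets S F).filter (fun K => convInterior S F K = ∅),
      (-1 : ℤ) ^ K.card = 0 := by
    rw [Finset.sum_filter]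
    exact h2
  have h4 : ∀ i ∈ Finset.range (S.card + 1), (-1 : ℤ) ^ i * (freeCount S F i : ℤ)
      = ∑ K ∈ ((convexSets S F).filter (fun K => convInterior S F K = ∅)).filter
          (fun K => K.card = i), (-1 : ℤ) ^ K.card := by
    intro i _
    have hset : ((convexSets S F).filter (fun K => convInterior S F K = ∅)).filter
        (fun K => K.card = i)
        = (convexSets S F).filter (fun C => C.card = i ∧ convInterior S F C = ∅) := by
      rw [Finset.filter_filter]
      exact Finset.filter_congr (fun K _ => and_comm)
    rw [hset, freeCount]
    have hc : ∑ K ∈ (convexSets S F).filter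
          (fun C => C.card = i ∧ convInterior S F C = ∅), (-1 : ℤ) ^ K.card
        = ∑ K ∈ (convexSets S F).filter
          (fun C => C.card = i ∧ convInterior S F C = ∅), (-1 : ℤ) ^ i :=
      Finset.sum_congr rfl (fun K hK => by rw [(Finset.mem_filter.1 hK).2.1])
    rw [hc, Finset.sum_const, nsmul_eq_mul, mul_comm]
  rw [Finset.sum_congr rfl h4]
  rw [Finset.sum_fiberwise_of_maps_to (fun K hK => by
    rw [Finset.mem_range, Nat.lt_succ_iff]
    exact Finset.card_le_card (mem_convexSets.1 (Finset.mem_filter.1 hK).1).1)]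
  exact h3
end
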